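/- arXiv:0804.3825 — 3 statements merged into one kernel-verified Lean document; each statement's English description precedes it below -/
import Mathlib

section
/- Let V, X, Y1, Y2 be finitely-valued random variables, with X, Y1, Y2 Boolean-valued, such that (Y1,Y2) is conditionally independent of V given X and, conditionally on X, the pair (Y1,Y2) is distributed according to the BSSC with p = 1/2. Let η = P(X=0) and, for each v with P(V=v) > 0, let α_v = P(X=0 | V=v). Then I(V;Y2) − I(V;Y1) = Σ_v P(V=v)·f(α_v) − f(η), where f(t) = h(t/2) − h((1−t)/2) and the sum is over values v of V. -/
open MeasureTheory Real

noncomputable def prob {Ω : Type*} [MeasurableSpace Ω] (μ : Measure Ω) {A : Type*}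
    (X : Ω → A) (a : A) : ℝ :=
  (μ (X ⁻¹' {a})).toReal

noncomputable def entropy {Ω : Type*} [MeasurableSpace Ω] (μ : Measure Ω) {A : Type*}
    [Fintype A] (X : Ω → A) : ℝ :=
  ∑ a, Real.negMulLog (prob μ X a)

noncomputable def mutualInfo {Ω : Type*} [MeasurableSpace Ω] (μ : Measure Ω)
    {A B : Type*} [Fintype A] [Fintype B] (X : Ω → A) (Y : Ω → B) : ℝ :=
  entropy μ X + entropy μ Y - entropy μ (fun ω => (X ω, Y ω))

noncomputable def condMutualInfo {Ω : Type*} [MeasurableSpace Ω] (μ : Measure Ω)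
    {A B C : Type*} [Fintype A] [Fintype B] [Fintype C]
    (X : Ω → A) (Y : Ω → B) (Z : Ω → C) : ℝ :=
  entropy μ (fun ω => (X ω, Z ω)) + entropy μ (fun ω => (Y ω, Z ω))
    - entropy μ (fun ω => (X ω, Y ω, Z ω)) - entropy μ Z

/-- `W` and `Y` are conditionally independent given `X` (Markov chain `W → X → Y`). -/
def CondIndepGiven {Ω : Type*} [MeasurableSpace Ω] (μ : Measure Ω) {A B C : Type*}
    (W : Ω → A) (X : Ω → B) (Y : Ω → C) : Prop :=
  ∀ a b c, prob μ (fun ω => (W ω, X ω, Y ω)) (a, b, c) * prob μ X b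
    = prob μ (fun ω => (W ω, X ω)) (a, b) * prob μ (fun ω => (X ω, Y ω)) (b, c)

noncomputable def bsscK (x y1 y2 : Bool) : ℝ :=
  if x = false then (if y2 = false then 1 / 2 else 0)
  else (if y1 = true then 1 / 2 else 0)

def IsBSSC {Ω : Type*} [MeasurableSpace Ω] (μ : Measure Ω) (X Y1 Y2 : Ω → Bool) : Prop :=
  ∀ x y1 y2, prob μ (fun ω => (X ω, Y1 ω, Y2 ω)) (x, y1, y2) = prob μ X x * bsscK x y1 y2

noncomputable def binH (x : ℝ) : ℝ := Real.negMulLog x + Real.negMulLog (1 - x)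

noncomputable def fskew (η : ℝ) : ℝ := binH (η / 2) - binH ((1 - η) / 2)

/-! Write `I(V;Y₂) − I(V;Y₁) = [H(V,Y₁) − H(V,Y₂)] − [H(Y₁) − H(Y₂)]`. By the Markov property the
law of `(V,X,Y₁,Y₂)` is `P(V=v, X=x) · bsscK x y₁ y₂`, so with `a = P(V=v, X=0)`, `b = P(V=v, X=1)`
the fibre of `(V,Y₁)` over `v` has weights `a/2 + b, a/2` and that of `(V,Y₂)` has `b/2, a + b/2`.
Expanding `negMulLog (p t) = t · negMulLog p + p · negMulLog t` with `p = a + b`, the terms in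
`negMulLog p` cancel and the fibre contributes `p · f(a/p)` to `H(V,Y₁) − H(V,Y₂)`. The marginal
term `H(Y₁) − H(Y₂) = f(η)` is the same computation for a constant `V`. -/

open Finset

section FiniteLaws

variable {Ω α β γ : Type*} [MeasurableSpace Ω] {μ : Measure Ω}

lemma prob_congr {F : Ω → α} {G : Ω → β} {a : α} {b : β} (h : ∀ ω, F ω = a ↔ G ω = b) :
    prob μ F a = prob μ G b := by
  unfold prob
  congr 2
  ext ω
  exact h ω

lemma prob_nonneg (F : Ω → α) (a : α) : 0 ≤ prob μ F a :=
  ENNReal.toReal_nonneg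

lemma prob_le_prob_of_imp [IsFiniteMeasure μ] {F : Ω → α} {G : Ω → β} {a : α} {b : β}
    (h : ∀ ω, F ω = a → G ω = b) : prob μ F a ≤ prob μ G b :=
  ENNReal.toReal_mono (measure_ne_top μ _) (measure_mono fun ω => h ω)

lemma prob_unit [IsProbabilityMeasure μ] : prob μ (fun _ : Ω => ()) () = 1 := by
  simp [prob]

lemma prob_eq_sum_prob_pair [IsFiniteMeasure μ] [MeasurableSpace α] [MeasurableSingletonClass α]
    [Fintype β] [MeasurableSpace β] [MeasurableSingletonClass β] {F : Ω → α} {G : Ω → β}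
    (hF : Measurable F) (hG : Measurable G) (a : α) :
    prob μ F a = ∑ b, prob μ (fun ω => (F ω, G ω)) (a, b) := by
  classical
  have h := sum_measureReal_preimage_singleton (μ := μ) (univ.image (Prod.mk a))
    (fun _ _ => (hF.prodMk hG) (measurableSet_singleton _))
  rw [sum_image fun _ _ _ _ h => Prod.mk_right_injective a h] at h
  exact (congrArg μ.real (by ext ω; simp [Prod.ext_iff, eq_comm])).trans h.symm

lemma prob_eq_sum_sum_prob_triple [IsFiniteMeasure μ] [MeasurableSpace α]
    [MeasurableSingletonClass α] [Fintype β] [MeasurableSpace β] [MeasurableSingletonClass β]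
    [Fintype γ] [MeasurableSpace γ] [MeasurableSingletonClass γ]
    {F : Ω → α} {G : Ω → β} {H : Ω → γ} (hF : Measurable F) (hG : Measurable G)
    (hH : Measurable H) (a : α) :
    prob μ F a = ∑ b, ∑ c, prob μ (fun ω => (F ω, G ω, H ω)) (a, b, c) := by
  rw [prob_eq_sum_prob_pair hF hG]
  refine sum_congr rfl fun b _ => ?_
  rw [prob_eq_sum_prob_pair (hF.prodMk hG) hH]
  exact sum_congr rfl fun c _ => prob_congr fun ω => by simp [Prod.ext_iff, and_assoc]

lemma entropy_unit_pair [Fintype α] (F : Ω → α) :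
    entropy μ (fun ω => ((), F ω)) = entropy μ F := by
  unfold entropy
  rw [Fintype.sum_prod_type, Fintype.sum_unique]
  exact sum_congr rfl fun a _ => congrArg _ (prob_congr fun ω => by simp)

lemma condIndepGiven_unit (X : Ω → β) (Y : Ω → γ) : CondIndepGiven μ (fun _ => ()) X Y := by
  intro _ b c
  have hXY : prob μ (fun ω => ((), X ω, Y ω)) ((), b, c) = prob μ (fun ω => (X ω, Y ω)) (b, c) :=
    prob_congr fun ω => by simp
  have hX : prob μ (fun ω => ((), X ω)) ((), b) = prob μ X b := prob_congr fun ω => by simp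
  rw [hXY, hX, mul_comm]

lemma CondIndepGiven.prob_triple_eq_mul [IsFiniteMeasure μ] {W : Ω → α} {X : Ω → β}
    {Y : Ω → γ} (hWY : CondIndepGiven μ W X Y) {K : β → γ → ℝ}
    (hK : ∀ b c, prob μ (fun ω => (X ω, Y ω)) (b, c) = prob μ X b * K b c) (a : α) (b : β)
    (c : γ) :
    prob μ (fun ω => (W ω, X ω, Y ω)) (a, b, c) = prob μ (fun ω => (W ω, X ω)) (a, b) * K b c := by
  by_cases hb : prob μ X b = 0
  · have hWXY : prob μ (fun ω => (W ω, X ω, Y ω)) (a, b, c) = 0 :=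
      le_antisymm (hb ▸ prob_le_prob_of_imp fun ω h => by simp_all [Prod.ext_iff]) (prob_nonneg _ _)
    have hWX : prob μ (fun ω => (W ω, X ω)) (a, b) = 0 :=
      le_antisymm (hb ▸ prob_le_prob_of_imp fun ω h => by simp_all [Prod.ext_iff]) (prob_nonneg _ _)
    rw [hWXY, hWX, zero_mul]
  · apply mul_right_cancel₀ hb
    rw [hWY, hK]
    ring

end FiniteLaws

lemma negMulLog_sub_negMulLog_eq_mul_fskew {p a b c : ℝ} (hab : a + b = p) (ha : a = p * c) :
    negMulLog (a / 2 + b) + negMulLog (a / 2) - (negMulLog (b / 2) + negMulLog (a + b / 2))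
      = p * fskew c := by
  have hb : b = p * (1 - c) := by linear_combination hab - ha
  subst ha hb
  rw [show p * c / 2 + p * (1 - c) = p * ((2 - c) / 2) by ring,
    show p * c + p * (1 - c) / 2 = p * ((1 + c) / 2) by ring,
    show p * c / 2 = p * (c / 2) by ring,
    show p * (1 - c) / 2 = p * ((1 - c) / 2) by ring,
    negMulLog_mul, negMulLog_mul, negMulLog_mul, negMulLog_mul, fskew, binH, binH,
    show 1 - c / 2 = (2 - c) / 2 by ring, show 1 - (1 - c) / 2 = (1 + c) / 2 by ring]
  ring

section BSSC

variable {Ω W : Type*} [MeasurableSpace Ω] {μ : Measure Ω} [IsFiniteMeasure μ]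
  {V : Ω → W} {X Y1 Y2 : Ω → Bool}

lemma IsBSSC.prob_quad_eq_mul (hBSSC : IsBSSC μ X Y1 Y2)
    (hMarkov : CondIndepGiven μ V X (fun ω => (Y1 ω, Y2 ω))) (v : W) (x y1 y2 : Bool) :
    prob μ (fun ω => (V ω, X ω, Y1 ω, Y2 ω)) (v, x, y1, y2)
      = prob μ (fun ω => (V ω, X ω)) (v, x) * bsscK x y1 y2 :=
  hMarkov.prob_triple_eq_mul (K := fun x y => bsscK x y.1 y.2) (fun x y => hBSSC x y.1 y.2)
    v x (y1, y2)

variable [Fintype W] [MeasurableSpace W] [MeasurableSingletonClass W]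

lemma IsBSSC.entropy_pair_fst (hBSSC : IsBSSC μ X Y1 Y2)
    (hMarkov : CondIndepGiven μ V X (fun ω => (Y1 ω, Y2 ω)))
    (hV : Measurable V) (hX : Measurable X) (hY1 : Measurable Y1) (hY2 : Measurable Y2) :
    entropy μ (fun ω => (V ω, Y1 ω))
      = ∑ v, (negMulLog (prob μ (fun ω => (V ω, X ω)) (v, false) / 2
          + prob μ (fun ω => (V ω, X ω)) (v, true))
        + negMulLog (prob μ (fun ω => (V ω, X ω)) (v, false) / 2)) := by
  unfold entropy
  rw [Fintype.sum_prod_type]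
  refine sum_congr rfl fun v _ => ?_
  have hlaw : ∀ y1, prob μ (fun ω => (V ω, Y1 ω)) (v, y1)
      = ∑ x, ∑ y2, prob μ (fun ω => (V ω, X ω)) (v, x) * bsscK x y1 y2 := by
    intro y1
    rw [prob_eq_sum_sum_prob_triple (hV.prodMk hY1) hX hY2]
    refine sum_congr rfl fun x _ => sum_congr rfl fun y2 _ => ?_
    rw [← hBSSC.prob_quad_eq_mul hMarkov]
    exact prob_congr fun ω => by simp only [Prod.ext_iff]; tauto
  norm_num [hlaw, bsscK]
  ring_nf

lemma IsBSSC.entropy_pair_snd (hBSSC : IsBSSC μ X Y1 Y2)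
    (hMarkov : CondIndepGiven μ V X (fun ω => (Y1 ω, Y2 ω)))
    (hV : Measurable V) (hX : Measurable X) (hY1 : Measurable Y1) (hY2 : Measurable Y2) :
    entropy μ (fun ω => (V ω, Y2 ω))
      = ∑ v, (negMulLog (prob μ (fun ω => (V ω, X ω)) (v, true) / 2)
        + negMulLog (prob μ (fun ω => (V ω, X ω)) (v, false)
          + prob μ (fun ω => (V ω, X ω)) (v, true) / 2)) := by
  unfold entropy
  rw [Fintype.sum_prod_type]
  refine sum_congr rfl fun v _ => ?_
  have hlaw : ∀ y2, prob μ (fun ω => (V ω, Y2 ω)) (v, y2)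
      = ∑ x, ∑ y1, prob μ (fun ω => (V ω, X ω)) (v, x) * bsscK x y1 y2 := by
    intro y2
    rw [prob_eq_sum_sum_prob_triple (hV.prodMk hY2) hX hY1]
    refine sum_congr rfl fun x _ => sum_congr rfl fun y1 _ => ?_
    rw [← hBSSC.prob_quad_eq_mul hMarkov]
    exact prob_congr fun ω => by simp only [Prod.ext_iff]; tauto
  norm_num [hlaw, bsscK]
  ring_nf

lemma IsBSSC.entropy_pair_fst_sub_entropy_pair_snd (hBSSC : IsBSSC μ X Y1 Y2)
    (hMarkov : CondIndepGiven μ V X (fun ω => (Y1 ω, Y2 ω)))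
    (hV : Measurable V) (hX : Measurable X) (hY1 : Measurable Y1) (hY2 : Measurable Y2)
    {α : W → ℝ} (hα : ∀ v, prob μ (fun ω => (V ω, X ω)) (v, false) = prob μ V v * α v) :
    entropy μ (fun ω => (V ω, Y1 ω)) - entropy μ (fun ω => (V ω, Y2 ω))
      = ∑ v, prob μ V v * fskew (α v) := by
  rw [hBSSC.entropy_pair_fst hMarkov hV hX hY1 hY2, hBSSC.entropy_pair_snd hMarkov hV hX hY1 hY2,
    ← sum_sub_distrib]
  refine sum_congr rfl fun v _ => negMulLog_sub_negMulLog_eq_mul_fskew ?_ (hα v)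
  rw [prob_eq_sum_prob_pair hV hX, Fintype.sum_bool, add_comm]

end BSSC

/-- For `V → X → (Y₁,Y₂)` with `(Y₁,Y₂)` a BSSC (`p = 1/2`) output of `X`,
with `η = P(X = 0)` and `α_v = P(X = 0 | V = v)` whenever `P(V = v) > 0`,
`I(V;Y₂) − I(V;Y₁) = Σ_v P(V = v) f(α_v) − f(η)` where `f(t) = h(t/2) − h((1−t)/2)`. -/
theorem stmt6 {Ω A : Type*} [MeasurableSpace Ω]
    (μ : Measure Ω) [IsProbabilityMeasure μ]
    [Fintype A] [MeasurableSpace A] [MeasurableSingletonClass A]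
    (V : Ω → A) (X Y1 Y2 : Ω → Bool)
    (hV : Measurable V) (hX : Measurable X) (hY1 : Measurable Y1) (hY2 : Measurable Y2)
    (hMarkov : CondIndepGiven μ V X (fun ω => (Y1 ω, Y2 ω)))
    (hBSSC : IsBSSC μ X Y1 Y2)
    (η : ℝ) (hη : prob μ X false = η)
    (α : A → ℝ)
    (hα : ∀ v, 0 < prob μ V v →
      prob μ (fun ω => (V ω, X ω)) (v, false) = prob μ V v * α v) :
    mutualInfo μ V Y2 - mutualInfo μ V Y1
      = (∑ v, prob μ V v * fskew (α v)) - fskew η := by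
  have hα' : ∀ v, prob μ (fun ω => (V ω, X ω)) (v, false) = prob μ V v * α v := by
    intro v
    rcases (prob_nonneg (μ := μ) V v).eq_or_lt with hv | hv
    · have hle : prob μ (fun ω => (V ω, X ω)) (v, false) ≤ prob μ V v :=
        prob_le_prob_of_imp fun ω h => congrArg Prod.fst h
      rw [← hv, zero_mul]
      exact le_antisymm (hv ▸ hle) (prob_nonneg _ _)
    · exact hα v hv
  have hjoint := hBSSC.entropy_pair_fst_sub_entropy_pair_snd hMarkov hV hX hY1 hY2 hα'
  have hmarginal := hBSSC.entropy_pair_fst_sub_entropy_pair_snd (condIndepGiven_unit _ _)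
    measurable_const hX hY1 hY2 (α := fun _ => η)
    fun _ => by rw [prob_unit, one_mul, ← hη]; exact prob_congr fun ω => by simp
  rw [entropy_unit_pair, entropy_unit_pair, Fintype.sum_unique, prob_unit, one_mul] at hmarginal
  unfold mutualInfo
  linarith
end

section
/- The function f : [0,1] → ℝ defined by f(η) = h(η/2) − h((1−η)/2) is concave on the interval [0, 1/2] and convex on the interval [1/2, 1]. -/
open MeasureTheory Real

/-!
Since `h' p = log ((1 - p) / p)`, the derivative of `f` is
`f' η = ½ log ((2 - η)(1 + η) / (η (1 - η))) = ½ log (1 + 2 / (η (1 - η)))`.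
It is a decreasing function of `η (1 - η)`, which increases on `[0, 1/2]` and decreases on
`[1/2, 1]`; so `f'` is antitone on the first interval and monotone on the second.
-/

open Set

lemma binH_eq_binEntropy : binH = binEntropy :=
  funext fun p => (binEntropy_eq_negMulLog_add_negMulLog_one_sub p).symm

lemma monotoneOn_mul_one_sub : MonotoneOn (fun x : ℝ => x * (1 - x)) (Iic (1 / 2)) :=
  fun x _ y hy hxy => by simp only [mem_Iic] at hy; nlinarith

lemma antitoneOn_mul_one_sub : AntitoneOn (fun x : ℝ => x * (1 - x)) (Ici (1 / 2)) :=
  fun x hx y _ hxy => by simp only [mem_Ici] at hx; nlinarith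

lemma antitoneOn_log_one_add_two_div : AntitoneOn (fun t : ℝ => log (1 + 2 / t)) (Ioi 0) :=
  fun s hs t ht hst => by
    simp only [mem_Ioi] at hs ht
    change log (1 + 2 / t) ≤ log (1 + 2 / s)
    gcongr

lemma mul_one_sub_pos {x : ℝ} (h0 : 0 < x) (h1 : x < 1) : 0 < x * (1 - x) :=
  mul_pos h0 (sub_pos.mpr h1)

lemma hasDerivAt_fskew {η : ℝ} (h0 : 0 < η) (h1 : η < 1) :
    HasDerivAt fskew (log (1 + 2 / (η * (1 - η))) / 2) η := by
  have hhalf := (hasDerivAt_binEntropy (p := η / 2) (by positivity) (by linarith)).comp η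
    ((hasDerivAt_id η).div_const 2)
  have hhalf' := (hasDerivAt_binEntropy (p := (1 - η) / 2) (by linarith) (by linarith)).comp η
    (((hasDerivAt_id η).const_sub 1).div_const 2)
  have hderiv := hhalf.sub hhalf'
  simp only [Function.comp_def, id_eq, ← binH_eq_binEntropy] at hderiv
  refine hderiv.congr_deriv ?_
  have hη : η ≠ 0 := h0.ne'
  have hη' : 1 - η ≠ 0 := (sub_pos.mpr h1).ne'
  have hprod : (1 + 2 / (η * (1 - η))) =
      ((1 - η / 2) / (η / 2)) * ((1 - (1 - η) / 2) / ((1 - η) / 2)) := by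
    field_simp
    ring
  rw [hprod,
    log_mul (div_pos (by linarith) (by linarith)).ne' (div_pos (by linarith) (by linarith)).ne',
    log_div (x := 1 - η / 2) (by linarith) (by positivity),
    log_div (x := 1 - (1 - η) / 2) (by linarith) (by linarith)]
  ring

lemma differentiableOn_fskew : DifferentiableOn ℝ fskew (Ioo 0 1) :=
  fun _ hη => (hasDerivAt_fskew hη.1 hη.2).differentiableAt.differentiableWithinAt

lemma deriv_fskew {η : ℝ} (h0 : 0 < η) (h1 : η < 1) :
    deriv fskew η = log (1 + 2 / (η * (1 - η))) / 2 :=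
  (hasDerivAt_fskew h0 h1).deriv

lemma antitoneOn_deriv_fskew : AntitoneOn (deriv fskew) (Ioo 0 (1 / 2)) := by
  intro x hx y hy hxy
  have hx1 : x < 1 := by linarith [hx.2]
  have hy1 : y < 1 := by linarith [hy.2]
  have := antitoneOn_log_one_add_two_div (mul_one_sub_pos hx.1 hx1) (mul_one_sub_pos hy.1 hy1)
    (monotoneOn_mul_one_sub hx.2.le hy.2.le hxy)
  rw [deriv_fskew hx.1 hx1, deriv_fskew hy.1 hy1]
  exact div_le_div_of_nonneg_right this zero_le_two

lemma monotoneOn_deriv_fskew : MonotoneOn (deriv fskew) (Ioo (1 / 2) 1) := by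
  intro x hx y hy hxy
  have hx0 : 0 < x := by linarith [hx.1]
  have hy0 : 0 < y := by linarith [hy.1]
  have := antitoneOn_log_one_add_two_div (mul_one_sub_pos hy0 hy.2) (mul_one_sub_pos hx0 hx.2)
    (antitoneOn_mul_one_sub hx.1.le hy.1.le hxy)
  rw [deriv_fskew hx0 hx.2, deriv_fskew hy0 hy.2]
  exact div_le_div_of_nonneg_right this zero_le_two

lemma continuous_fskew : Continuous fskew := by
  unfold fskew binH
  fun_prop

/-- `f(η) = h(η/2) − h((1−η)/2)` is concave on `[0, 1/2]` and convex
on `[1/2, 1]`. -/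
theorem stmt7 :
    ConcaveOn ℝ (Set.Icc (0 : ℝ) (1 / 2)) fskew ∧
    ConvexOn ℝ (Set.Icc (1 / 2 : ℝ) 1) fskew := by
  constructor
  · refine AntitoneOn.concaveOn_of_deriv (convex_Icc _ _) continuous_fskew.continuousOn ?_ ?_
      <;> rw [interior_Icc]
    · exact differentiableOn_fskew.mono (Ioo_subset_Ioo_right (by norm_num))
    · exact antitoneOn_deriv_fskew
  · refine MonotoneOn.convexOn_of_deriv (convex_Icc _ _) continuous_fskew.continuousOn ?_ ?_
      <;> rw [interior_Icc]
    · exact differentiableOn_fskew.mono (Ioo_subset_Ioo_left (by norm_num))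
    · exact monotoneOn_deriv_fskew
end

section
/- Let f(η) = h(η/2) − h((1−η)/2). Then η0 = 1/5 satisfies the tangency equation f'(η0) = (log 2 − f(η0))/(1 − η0), where f'(η) = (1/2)·log((2−η)/η) + (1/2)·log((1+η)/(1−η)) is the derivative of f on (0,1); moreover η0 = 1/5 is the unique solution of this equation in the interval (0, 1/2]. (Equivalently, the line joining the point (1/5, f(1/5)) to the point (1, log 2) = (1, f(1)) is tangent to the graph of f at η = 1/5.) -/
open MeasureTheory Real

/-- The derivative of `fskew` on `(0,1)`. -/
noncomputable def fskewDeriv (η : ℝ) : ℝ :=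
  (1 / 2) * Real.log ((2 - η) / η) + (1 / 2) * Real.log ((1 + η) / (1 - η))

/-!
Clearing the denominator, the tangency equation at `η < 1` says that
`tangencyGap η = (1 - η) f'(η) + f(η) - log 2` vanishes. Its derivative is `(1 - η) f''` with
`f''(η) = 1 / (1 - η²) - 1 / (η (2 - η))`, which is negative on `(0, 1/2)` because
`η (2 - η) < 1 - η²` there. So the gap is strictly decreasing on `(0, 1/2]` and has at most one
zero, and `tangencyGap (1/5) = 0` is a computation with `log 2`, `log 3` and `log 5`.
-/

open Set

lemma hasDerivAt_binH {x : ℝ} (hx₀ : x ≠ 0) (hx₁ : x ≠ 1) :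
    HasDerivAt binH (log ((1 - x) / x)) x := by
  have hx₁' : 1 - x ≠ 0 := sub_ne_zero.mpr hx₁.symm
  have h : HasDerivAt binH _ x := (hasDerivAt_negMulLog hx₀).add
    ((hasDerivAt_negMulLog hx₁').comp x ((hasDerivAt_id x).const_sub 1))
  refine h.congr_deriv ?_
  rw [log_div hx₁' hx₀]
  ring

lemma hasDerivAt_fskew_s8 {η : ℝ} (hη : η ∈ Ioo (0 : ℝ) 1) :
    HasDerivAt fskew (fskewDeriv η) η := by
  obtain ⟨h₀, h₁⟩ := hη
  have hA := (hasDerivAt_binH (x := η / 2) (by positivity) (by linarith)).comp η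
    ((hasDerivAt_id η).div_const 2)
  have hB := (hasDerivAt_binH (x := (1 - η) / 2) (by linarith) (by linarith)).comp η
    (((hasDerivAt_id η).const_sub 1).div_const 2)
  refine (show HasDerivAt fskew _ η from hA.sub hB).congr_deriv ?_
  have e₁ : (1 - η / 2) / (η / 2) = (2 - η) / η := by field_simp
  have e₂ : (1 - (1 - η) / 2) / ((1 - η) / 2) = (1 + η) / (1 - η) := by
    field_simp [sub_ne_zero.mpr h₁.ne']; ring
  simp only [fskewDeriv, e₁, e₂]
  ring

lemma hasDerivAt_fskewDeriv {η : ℝ} (hη : η ∈ Ioo (0 : ℝ) 1) :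
    HasDerivAt fskewDeriv (1 / (1 - η ^ 2) - 1 / (η * (2 - η))) η := by
  obtain ⟨h₀, h₁⟩ := hη
  have h₂ : 2 - η ≠ 0 := by linarith
  have h₁' : 1 - η ≠ 0 := by linarith
  have h₁'' : 1 + η ≠ 0 := by linarith
  have hA := (((hasDerivAt_id η).const_sub 2).div (hasDerivAt_id η) h₀.ne').log
    (div_ne_zero h₂ h₀.ne')
  have hB := (((hasDerivAt_id η).const_add 1).div ((hasDerivAt_id η).const_sub 1) h₁').log
    (div_ne_zero h₁'' h₁')
  refine (show HasDerivAt fskewDeriv _ η from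
    (hA.const_mul (1 / 2)).add (hB.const_mul (1 / 2))).congr_deriv ?_
  have : 1 - η ^ 2 = (1 + η) * (1 - η) := by ring
  simp only [id, Pi.div_apply, this]
  field_simp
  ring

lemma one_div_one_sub_sq_lt_one_div_mul_two_sub {η : ℝ} (h₀ : 0 < η) (h₁ : η < 1 / 2) :
    1 / (1 - η ^ 2) < 1 / (η * (2 - η)) :=
  one_div_lt_one_div_of_lt (by nlinarith) (by nlinarith)

noncomputable def tangencyGap (η : ℝ) : ℝ := (1 - η) * fskewDeriv η + fskew η - log 2

lemma tangency_iff_tangencyGap_eq_zero {η : ℝ} (hη : η ≠ 1) :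
    fskewDeriv η = (log 2 - fskew η) / (1 - η) ↔ tangencyGap η = 0 := by
  rw [eq_div_iff (sub_ne_zero.mpr hη.symm), tangencyGap]
  constructor <;> intro h <;> linarith

lemma hasDerivAt_tangencyGap {η : ℝ} (hη : η ∈ Ioo (0 : ℝ) 1) :
    HasDerivAt tangencyGap ((1 - η) * (1 / (1 - η ^ 2) - 1 / (η * (2 - η)))) η := by
  have h : HasDerivAt tangencyGap _ η :=
    ((((hasDerivAt_id η).const_sub 1).mul (hasDerivAt_fskewDeriv hη)).add
      (hasDerivAt_fskew_s8 hη)).sub_const (log 2)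
  refine h.congr_deriv ?_
  simp only [id]
  ring

lemma tangencyGap_strictAntiOn : StrictAntiOn tangencyGap (Ioc (0 : ℝ) (1 / 2)) := by
  have hderiv {η : ℝ} (hη : η ∈ Ioc (0 : ℝ) (1 / 2)) :=
    hasDerivAt_tangencyGap ⟨hη.1, by linarith [hη.2]⟩
  refine strictAntiOn_of_hasDerivWithinAt_neg (convex_Ioc 0 (1 / 2))
    (fun η hη ↦ (hderiv hη).continuousAt.continuousWithinAt)
    (fun η hη ↦ (hderiv (interior_subset hη)).hasDerivWithinAt) ?_
  rw [interior_Ioc]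
  rintro η ⟨h₀, h₁⟩
  exact mul_neg_of_pos_of_neg (by linarith) (sub_neg.mpr (one_div_one_sub_sq_lt_one_div_mul_two_sub h₀ h₁))

lemma tangencyGap_one_fifth : tangencyGap (1 / 5) = 0 := by
  have h₉ : log 9 = 2 * log 3 := by
    rw [show (9 : ℝ) = 3 ^ 2 by norm_num, log_pow]; norm_num
  have h₁₀ : log 10 = log 2 + log 5 := by
    rw [show (10 : ℝ) = 2 * 5 by norm_num, log_mul] <;> norm_num
  simp only [tangencyGap, fskewDeriv, fskew, binH, negMulLog]
  norm_num [log_div, h₉, h₁₀]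
  ring

/-- `fskewDeriv` is the derivative of `f` on `(0,1)`; `η₀ = 1/5`
satisfies the tangency equation `f'(η₀) = (log 2 − f(η₀))/(1 − η₀)`, and it is the
unique solution of this equation in `(0, 1/2]`. -/
theorem stmt8 :
    (∀ η ∈ Set.Ioo (0 : ℝ) 1, HasDerivAt fskew (fskewDeriv η) η) ∧
    fskewDeriv (1 / 5) = (Real.log 2 - fskew (1 / 5)) / (1 - 1 / 5) ∧
    (∀ η ∈ Set.Ioc (0 : ℝ) (1 / 2),
      fskewDeriv η = (Real.log 2 - fskew η) / (1 - η) → η = 1 / 5) := by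
  refine ⟨fun η hη ↦ hasDerivAt_fskew_s8 hη,
    (tangency_iff_tangencyGap_eq_zero (by norm_num)).mpr tangencyGap_one_fifth, ?_⟩
  intro η hη htangent
  have hgap := (tangency_iff_tangencyGap_eq_zero (by linarith [hη.2])).mp htangent
  exact tangencyGap_strictAntiOn.injOn hη ⟨by norm_num, by norm_num⟩
    (hgap.trans tangencyGap_one_fifth.symm)
end
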